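/- arXiv:2208.03490 — 14 statements merged into one kernel-verified Lean document; each statement's English description precedes it below -/
import Mathlib

section
/- In a left cancellative left semi-brace B, the set G := B + 0 = {b + 0 : b ∈ B} is a subgroup of the multiplicative group (B,∘). -/
/-- A left cancellative left semi-brace: `(B,+)` is a left cancellative semigroup,
`(B,*)` is a group (the paper's `∘`, with neutral element `1`, the paper's `0`),
and `a * (b + c) = a * b + a * (a⁻¹ + c)`. -/
class LeftSemiBrace (B : Type*) extends Add B, Group B where
  add_assoc' : ∀ a b c : B, a + b + c = a + (b + c)
  add_left_cancel' : ∀ a b c : B, a + b = a + c → b = c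
  compat : ∀ a b c : B, a * (b + c) = a * b + a * (a⁻¹ + c)

theorem stmt1 (B : Type*) [LeftSemiBrace B] :
    ∃ H : Subgroup B, (H : Set B) = {x : B | ∃ b : B, b + 1 = x} := by
  have h1 : ∀ c : B, (1 : B) + c = c := by
    intro c
    have h := LeftSemiBrace.compat (1 : B) 1 c
    simp only [one_mul, inv_one] at h
    exact (LeftSemiBrace.add_left_cancel' 1 c (1 + c) h).symm
  have h11 : (1 : B) + 1 = 1 := h1 1
  have hlem : ∀ x : B, x + 1 = x → ∀ b : B, x⁻¹ * (b + 1) = x⁻¹ * b + 1 := by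
    intro x hx b
    have h := LeftSemiBrace.compat x⁻¹ b 1
    rw [inv_inv, hx, inv_mul_cancel] at h
    exact h
  have hinv : ∀ x : B, x + 1 = x → x⁻¹ + 1 = x⁻¹ := by
    intro x hx
    have h := hlem x hx 1
    rw [h11, mul_one] at h
    exact h.symm
  have hmul : ∀ x y : B, x + 1 = x → y + 1 = y → x * y + 1 = x * y := by
    intro x y hx hy
    have h := hlem x⁻¹ (hinv x hx) y
    rw [inv_inv, hy] at h
    exact h.symm
  refine ⟨{ carrier := {x : B | x + 1 = x},
            one_mem' := h11,
            mul_mem' := fun ha hb => hmul _ _ ha hb,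
            inv_mem' := fun ha => hinv _ ha }, ?_⟩
  ext x
  constructor
  · intro hx
    exact ⟨x, hx⟩
  · rintro ⟨b, rfl⟩
    show b + 1 + 1 = b + 1
    rw [LeftSemiBrace.add_assoc', h11]
end

section
/- In a left cancellative left semi-brace B, the set E of idempotents of the additive semigroup (B,+) is a subgroup of the multiplicative group (B,∘). -/
namespace LSBproof

open LeftSemiBrace

variable {B : Type*} [LeftSemiBrace B]

lemma one_add (c : B) : 1 + c = c := by
  have h := compat (1 : B) 1 c
  simp only [one_mul, inv_one] at h
  exact (add_left_cancel' (1 : B) _ _ h).symm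

lemma mul_eq (a c : B) : a * c = a + a * (a⁻¹ + c) := by
  have h := compat a 1 c
  rw [one_add, mul_one] at h
  exact h

lemma inv_add_one {e : B} (he : e + e = e) : e⁻¹ + 1 = 1 := by
  have h := mul_eq e⁻¹ e
  rw [inv_inv, he, inv_mul_cancel] at h
  exact h.symm

lemma inv_mem {e : B} (he : e + e = e) : e⁻¹ + e⁻¹ = e⁻¹ := by
  calc e⁻¹ + e⁻¹ = e⁻¹ + (1 + e⁻¹) := by rw [one_add]
  _ = (e⁻¹ + 1) + e⁻¹ := (add_assoc' _ _ _).symm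
  _ = 1 + e⁻¹ := by rw [inv_add_one he]
  _ = e⁻¹ := one_add _

lemma of_inv_add_one {a : B} (h : a⁻¹ + 1 = 1) : a + a = a := by
  have hm := mul_eq a 1
  rw [h, mul_one] at hm
  exact hm.symm

lemma add_one {e : B} (he : e + e = e) : e + 1 = 1 := by
  have := inv_add_one (inv_mem he)
  rwa [inv_inv] at this

lemma mul_mem {e f : B} (he : e + e = e) (hf : f + f = f) :
    (e * f) + (e * f) = e * f := by
  -- e * (f + 1) = e*f + e*(e⁻¹+1) = e*f + e, while e*(f+1) = e*1 = e
  have h1 : e = e * f + e := by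
    have h := compat e f 1
    rw [add_one hf, mul_one, inv_add_one he, mul_one] at h
    exact h
  have h2 : (e * f) + 1 = 1 := by
    calc (e * f) + 1 = e * f + (e + 1) := by rw [add_one he]
    _ = (e * f + e) + 1 := (add_assoc' _ _ _).symm
    _ = e + 1 := by rw [← h1]
    _ = 1 := add_one he
  have h3 : ((e * f)⁻¹) + ((e * f)⁻¹) = (e * f)⁻¹ :=
    of_inv_add_one (by rwa [inv_inv])
  have := inv_mem h3
  rwa [inv_inv] at this

end LSBproof

theorem stmt2 (B : Type*) [LeftSemiBrace B] :
    ∃ H : Subgroup B, (H : Set B) = {e : B | e + e = e} := by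
  refine ⟨{ carrier := {e : B | e + e = e}
            one_mem' := LSBproof.one_add 1
            mul_mem' := fun ha hb => LSBproof.mul_mem ha hb
            inv_mem' := fun ha => LSBproof.inv_mem ha }, rfl⟩
end

section
/- Let B be a left cancellative left semi-brace. For each a ∈ B, the map λ_a : B → B defined by λ_a(b) := a∘(a⁻ + b) is an automorphism of the semigroup (B,+), and the map a ↦ λ_a is a group homomorphism from (B,∘) to Aut(B,+). -/
theorem stmt3 (B : Type*) [LeftSemiBrace B] :
    (∀ a : B, Function.Bijective (fun b : B => a * (a⁻¹ + b)) ∧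
      ∀ b c : B, a * (a⁻¹ + (b + c)) = a * (a⁻¹ + b) + a * (a⁻¹ + c)) ∧
    (∀ a a' b : B, (a * a') * ((a * a')⁻¹ + b) = a * (a⁻¹ + a' * (a'⁻¹ + b))) := by
  have hc := LeftSemiBrace.compat (B := B)
  have hcan := LeftSemiBrace.add_left_cancel' (B := B)
  have hassoc := LeftSemiBrace.add_assoc' (B := B)
  -- `1` is a left identity for `+`
  have hone : ∀ c : B, (1 : B) + c = c := by
    intro c
    have h := hc 1 1 c
    simp only [one_mul, inv_one] at h
    exact (hcan 1 (1 + c) c h.symm)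
  -- the cocycle identity
  have hco : ∀ a a' b : B, (a * a') * ((a * a')⁻¹ + b) = a * (a⁻¹ + a' * (a'⁻¹ + b)) := by
    intro a a' b
    have h1 : (a * a') * ((a * a')⁻¹ + b) = a * (a' * (a'⁻¹ * a⁻¹ + b)) := by
      rw [mul_inv_rev, mul_assoc]
    rw [h1, hc a' (a'⁻¹ * a⁻¹) b, show a' * (a'⁻¹ * a⁻¹) = a⁻¹ by group]
  refine ⟨fun a => ⟨⟨?_, ?_⟩, ?_⟩, hco⟩
  · -- injective
    intro b c h
    simp only at h
    have h2 : a⁻¹ + b = a⁻¹ + c := mul_left_cancel h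
    exact hcan a⁻¹ b c h2
  · -- surjective
    intro b
    refine ⟨a⁻¹ * (a⁻¹⁻¹ + b), ?_⟩
    have h := hco a a⁻¹ b
    simp only [mul_inv_cancel, inv_one] at h
    rw [one_mul, hone] at h
    exact h.symm
  · -- additive
    intro b c
    have h := hc a (a⁻¹ + b) c
    rw [hassoc] at h
    exact h
end

section
/- Let B be a left cancellative left semi-brace and λ_a(b) := a∘(a⁻ + b). Then λ_a(E) = E for every a ∈ B, where E is the set of additive idempotents of B. -/
lemma lsb_one_add {B : Type*} [LeftSemiBrace B] (c : B) : (1 : B) + c = c := by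
  have h := LeftSemiBrace.compat (1 : B) 1 c
  simp only [one_mul, inv_one] at h
  exact (LeftSemiBrace.add_left_cancel' 1 c (1 + c) h).symm

lemma lsb_lambda_mul {B : Type*} [LeftSemiBrace B] (a b c : B) :
    a * (a⁻¹ + b * (b⁻¹ + c)) = (a * b) * ((a * b)⁻¹ + c) := by
  have h := LeftSemiBrace.compat b (b⁻¹ * a⁻¹) c
  rw [mul_inv_cancel_left] at h
  rw [← h, ← mul_assoc, mul_inv_rev]

lemma lsb_lambda_idem {B : Type*} [LeftSemiBrace B] (a e : B) (he : e + e = e) :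
    a * (a⁻¹ + e) + a * (a⁻¹ + e) = a * (a⁻¹ + e) := by
  have h := LeftSemiBrace.compat a (a⁻¹ + e) e
  rw [LeftSemiBrace.add_assoc', he] at h
  exact h.symm

theorem stmt4 (B : Type*) [LeftSemiBrace B] :
    ∀ a : B, (fun b : B => a * (a⁻¹ + b)) '' {e : B | e + e = e} = {e : B | e + e = e} := by
  intro a
  ext x
  constructor
  · rintro ⟨e, he, rfl⟩
    exact lsb_lambda_idem a e he
  · intro hx
    refine ⟨a⁻¹ * (a⁻¹⁻¹ + x), lsb_lambda_idem a⁻¹ x hx, ?_⟩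
    show a * (a⁻¹ + a⁻¹ * (a⁻¹⁻¹ + x)) = x
    rw [lsb_lambda_mul, mul_inv_cancel, inv_one, one_mul, lsb_one_add]
end

section
/- Let B be a left cancellative left semi-brace and λ_a(b) := a∘(a⁻ + b). Then λ_a(0) = 0 if and only if a ∈ G, where G := B + 0. -/
lemma LeftSemiBrace.one_add_one (B : Type*) [LeftSemiBrace B] : (1 : B) + 1 = 1 := by
  have h := LeftSemiBrace.compat (1 : B) 1 1
  simp only [one_mul, inv_one] at h
  exact (LeftSemiBrace.add_left_cancel' (1 : B) 1 (1 + 1) h).symm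

theorem stmt5 (B : Type*) [LeftSemiBrace B] :
    ∀ a : B, a * (a⁻¹ + 1) = 1 ↔ ∃ b : B, b + 1 = a := by
  intro a
  have h11 := LeftSemiBrace.one_add_one B
  have hc := LeftSemiBrace.compat a 1 1
  rw [h11, mul_one] at hc
  -- hc : a = a + a * (a⁻¹ + 1)
  constructor
  · intro h
    rw [h] at hc
    exact ⟨a, hc.symm⟩
  · rintro ⟨b, rfl⟩
    have h2 : b + 1 + 1 = b + 1 := by
      rw [LeftSemiBrace.add_assoc', h11]
    have h3 : b + 1 + 1 = b + 1 + (b + 1) * ((b + 1)⁻¹ + 1) := h2.trans hc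
    exact (LeftSemiBrace.add_left_cancel' (b + 1) 1 _ h3).symm
end

section
/- Let B be a left cancellative left semi-brace. Every element b ∈ B can be written as b = g ∘ e with g ∈ G and e ∈ E; in particular B = G ∘ E. Moreover, if B is finite, then |B| = |G| · |E|. -/
namespace LSBAux

variable {B : Type*} [LeftSemiBrace B]

lemma aa (a b c : B) : a + b + c = a + (b + c) := LeftSemiBrace.add_assoc' a b c

lemma cancel {a b c : B} (h : a + b = a + c) : b = c :=
  LeftSemiBrace.add_left_cancel' a b c h

lemma compat (a b c : B) : a * (b + c) = a * b + a * (a⁻¹ + c) :=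
  LeftSemiBrace.compat a b c

lemma one_add (x : B) : 1 + x = x := by
  have h := compat (1 : B) 1 x
  simp only [one_mul, inv_one] at h
  exact (cancel h).symm

lemma one_one : (1 : B) + 1 = 1 := one_add 1

lemma add_eb (b : B) : b + b * (b⁻¹ + 1) = b := by
  have h := compat b 1 1
  rw [one_one, mul_one] at h
  exact h.symm

lemma idem_of_add_one {x : B} (h : x + 1 = 1) : x + x = x := by
  calc x + x = x + (1 + x) := by rw [one_add]
    _ = (x + 1) + x := (aa _ _ _).symm
    _ = 1 + x := by rw [h]
    _ = x := one_add x

lemma inv_add_one {e : B} (h : e + e = e) : e⁻¹ + 1 = 1 := by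
  have h2 := add_eb e
  have h3 : e * (e⁻¹ + 1) = e := cancel (by rw [h2]; exact h.symm)
  have h4 := congrArg (fun z => e⁻¹ * z) h3
  simpa [← mul_assoc] using h4

lemma add_one_of_idem {e : B} (h : e + e = e) : e + 1 = 1 := by
  have h1 := inv_add_one h
  have h2 := idem_of_add_one h1
  have h3 := inv_add_one h2
  simpa using h3

lemma e_idem (b : B) : (b + 1)⁻¹ * b + (b + 1)⁻¹ * b = (b + 1)⁻¹ * b := by
  have hb : b + b * (b⁻¹ + 1) = b := add_eb b
  have hg : ((b + 1)⁻¹)⁻¹ + b * (b⁻¹ + 1) = b := by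
    rw [inv_inv, aa, one_add]; exact hb
  have key := compat ((b + 1)⁻¹) b (b * (b⁻¹ + 1))
  rw [hb, hg] at key
  exact key.symm

lemma ge_add_one {g e : B} (hg : ∃ x : B, x + 1 = g) (he : e + e = e) :
    g * e + 1 = g := by
  obtain ⟨x, hx⟩ := hg
  have step1 : g * e = g + g * (g⁻¹ + e) := by
    have h := compat g 1 e
    rwa [one_add, mul_one] at h
  have step2 : g * (g⁻¹ + e) + g * (g⁻¹ + e) = g * (g⁻¹ + e) := by
    have h := compat g (g⁻¹ + e) e
    rw [aa, he] at h
    exact h.symm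
  have step3 : g * (g⁻¹ + e) + 1 = 1 := add_one_of_idem step2
  calc g * e + 1 = g + g * (g⁻¹ + e) + 1 := by rw [step1]
    _ = g + (g * (g⁻¹ + e) + 1) := aa _ _ _
    _ = g + 1 := by rw [step3]
    _ = x + 1 + 1 := by rw [hx]
    _ = x + (1 + 1) := aa _ _ _
    _ = x + 1 := by rw [one_one]
    _ = g := hx

/-- The bijection `B ≃ G × E`. -/
noncomputable def decompEquiv (B : Type*) [LeftSemiBrace B] :
    B ≃ {x : B | ∃ b : B, b + 1 = x} × {e : B | e + e = e} where
  toFun b := (⟨b + 1, b, rfl⟩, ⟨(b + 1)⁻¹ * b, e_idem b⟩)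
  invFun p := p.1.1 * p.2.1
  left_inv b := by simp
  right_inv p := by
    obtain ⟨⟨g, hg⟩, ⟨e, he⟩⟩ := p
    have h1 : g * e + 1 = g := ge_add_one hg he
    refine Prod.ext (Subtype.ext ?_) (Subtype.ext ?_)
    · exact h1
    · simp only [h1]
      simp

end LSBAux

theorem stmt6 (B : Type*) [LeftSemiBrace B] :
    (∀ b : B, ∃ g e : B, (∃ x : B, x + 1 = g) ∧ e + e = e ∧ b = g * e) ∧
    (Finite B →
      Nat.card B = Nat.card {x : B | ∃ b : B, b + 1 = x} * Nat.card {e : B | e + e = e}) := by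
  constructor
  · intro b
    exact ⟨b + 1, (b + 1)⁻¹ * b, ⟨b, rfl⟩, LSBAux.e_idem b,
      (mul_inv_cancel_left _ _).symm⟩
  · intro _
    rw [Nat.card_congr (LSBAux.decompEquiv B), Nat.card_prod]
end

section
/- Let B be a left cancellative left semi-brace, and let λ|_E denote the induced action of (B,∘) on E given by restriction of λ_a(b) = a∘(a⁻+b) to E. Then the kernel of λ|_E is contained in G := B + 0. -/
theorem stmt7 (B : Type*) [LeftSemiBrace B] :
    {b : B | ∀ e : B, e + e = e → b * (b⁻¹ + e) = e} ⊆ {x : B | ∃ c : B, c + 1 = x} := by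
  intro b hb
  have hadd : ∀ c : B, (1 : B) + c = c := by
    intro c
    have h := LeftSemiBrace.compat (1 : B) (1 : B) c
    simp only [one_mul, inv_one] at h
    exact (LeftSemiBrace.add_left_cancel' 1 c (1 + c) h).symm
  have h1 : (1 : B) + 1 = 1 := hadd 1
  have he : b * (b⁻¹ + 1) = 1 := hb 1 h1
  have hb' : b⁻¹ + (1 : B) = b⁻¹ := by
    have := congrArg (fun x => b⁻¹ * x) he
    simpa [inv_mul_cancel_left] using this
  have hc := LeftSemiBrace.compat b 1 1
  rw [h1, mul_one, hb', mul_inv_cancel] at hc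
  exact ⟨b, hc.symm⟩
end

section
/- Let B₁, B₂ be left cancellative left semi-braces and α : (B₂,∘) → Aut(B₁) a homomorphism into the group of semi-brace automorphisms of B₁. Then the operations (b₁,c₁)+(b₂,c₂) := (b₁+b₂, c₁+c₂) and (b₁,c₁)∘(b₂,c₂) := (b₁∘α_{c₁}(b₂), c₁∘c₂) make B₁×B₂ a left cancellative left semi-brace. -/
/-- Semidirect-product addition on `B₁ × B₂` (componentwise). -/
def sdAdd {B₁ B₂ : Type*} [LeftSemiBrace B₁] [LeftSemiBrace B₂]
    (x y : B₁ × B₂) : B₁ × B₂ :=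
  (x.1 + y.1, x.2 + y.2)

/-- Semidirect-product multiplication on `B₁ × B₂` via `α`. -/
def sdMul {B₁ B₂ : Type*} [LeftSemiBrace B₁] [LeftSemiBrace B₂]
    (α : B₂ → B₁ → B₁) (x y : B₁ × B₂) : B₁ × B₂ :=
  (x.1 * α x.2 y.1, x.2 * y.2)

/-- Semidirect-product multiplicative inverse on `B₁ × B₂` via `α`. -/
def sdInv {B₁ B₂ : Type*} [LeftSemiBrace B₁] [LeftSemiBrace B₂]
    (α : B₂ → B₁ → B₁) (x : B₁ × B₂) : B₁ × B₂ :=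
  (α x.2⁻¹ x.1⁻¹, x.2⁻¹)

/-- The semidirect product of left cancellative left semi-braces `B₁` and `B₂` via a
homomorphism `α` from `B₂` into the group of semi-brace automorphisms of `B₁` is again a
left cancellative left semi-brace. -/
theorem stmt9 {B₁ B₂ : Type*} [LeftSemiBrace B₁] [LeftSemiBrace B₂]
    (α : B₂ → B₁ → B₁)
    (hbij : ∀ c, Function.Bijective (α c))
    (hone : α 1 = id)
    (hcomp : ∀ c₁ c₂ : B₂, α (c₁ * c₂) = α c₁ ∘ α c₂)
    (hadd : ∀ (c : B₂) (x y : B₁), α c (x + y) = α c x + α c y)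
    (hmul : ∀ (c : B₂) (x y : B₁), α c (x * y) = α c x * α c y) :
    (∀ x y z : B₁ × B₂, sdAdd (sdAdd x y) z = sdAdd x (sdAdd y z)) ∧
    (∀ x y z : B₁ × B₂, sdAdd x y = sdAdd x z → y = z) ∧
    (∀ x y z : B₁ × B₂, sdMul α (sdMul α x y) z = sdMul α x (sdMul α y z)) ∧
    (∀ x : B₁ × B₂, sdMul α (1, 1) x = x) ∧
    (∀ x : B₁ × B₂, sdMul α x (1, 1) = x) ∧
    (∀ x : B₁ × B₂, sdMul α (sdInv α x) x = (1, 1)) ∧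
    (∀ x y z : B₁ × B₂,
      sdMul α x (sdAdd y z) = sdAdd (sdMul α x y) (sdMul α x (sdAdd (sdInv α x) z))) := by
  have hαone : ∀ c : B₂, α c 1 = 1 := by
    intro c
    have := hmul c 1 1
    simp at this
    exact this
  have hαinvcomp : ∀ (c : B₂) (x : B₁), α c (α c⁻¹ x) = x := by
    intro c x
    have := hcomp c c⁻¹
    rw [mul_inv_cancel, hone] at this
    exact (congrFun this x).symm
  refine ⟨?_, ?_, ?_, ?_, ?_, ?_, ?_⟩
  · intro x y z
    simp only [sdAdd, LeftSemiBrace.add_assoc']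
  · intro x y z h
    simp only [sdAdd, Prod.mk.injEq] at h
    exact Prod.ext (LeftSemiBrace.add_left_cancel' _ _ _ h.1)
      (LeftSemiBrace.add_left_cancel' _ _ _ h.2)
  · intro x y z
    simp only [sdMul, hcomp, Function.comp_apply, hmul, mul_assoc]
  · intro x
    simp [sdMul, hone]
  · intro x
    simp [sdMul, hαone]
  · intro x
    simp only [sdMul, sdInv, Prod.mk.injEq, inv_mul_cancel]
    constructor
    · rw [← hmul, inv_mul_cancel, hαone]
    · trivial
  · intro x y z
    simp only [sdMul, sdAdd, sdInv, Prod.mk.injEq]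
    constructor
    · rw [hadd, hadd, hαinvcomp, ← LeftSemiBrace.compat]
    · exact LeftSemiBrace.compat _ _ _
end

section
/- Let B be a left cancellative left semi-brace. Then G = Ker(λ|_E) if and only if B is isomorphic (as a left semi-brace) to a semidirect product A ⋊ T of a skew left brace A by a trivial left semi-brace T. -/
/-- A skew left brace: `(G,+)` and `(G,*)` are groups and
`a * (b + c) = a * b + -a + a * c`. -/
class SkewLeftBrace (G : Type*) extends AddGroup G, Group G where
  compat : ∀ a b c : G, a * (b + c) = a * b + -a + a * c

universe u

namespace LeftSemiBrace

variable {B : Type*} [LeftSemiBrace B]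

instance : AddSemigroup B where
  add_assoc := LeftSemiBrace.add_assoc'

instance : IsLeftCancelAdd B where
  add_left_cancel a b c := LeftSemiBrace.add_left_cancel' a b c

def lambda (a b : B) : B := a * (a⁻¹ + b)

theorem mul_add_eq (a b c : B) : a * (b + c) = a * b + lambda a c := compat a b c

theorem one_add (b : B) : 1 + b = b :=
  (add_left_cancel (a := (1 : B)) (by simpa [lambda] using compat (1 : B) 1 b)).symm

theorem one_add_one_s10 : (1 : B) + 1 = 1 := one_add 1

theorem add_one_add_one (a : B) : a + 1 + 1 = a + 1 := by rw [add_assoc, one_add_one_s10]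

theorem mul_eq_add_lambda (a b : B) : a * b = a + lambda a b := by
  simpa [one_add] using mul_add_eq a 1 b

theorem lambda_one_left (b : B) : lambda 1 b = b := by
  simp [lambda, one_add]

theorem lambda_mul (a b c : B) : lambda (a * b) c = lambda a (lambda b c) := by
  change a * b * ((a * b)⁻¹ + c) = a * (a⁻¹ + lambda b c)
  rw [mul_inv_rev, mul_assoc, mul_add_eq b, ← mul_assoc b, mul_inv_cancel, one_mul]

theorem lambda_add (a b c : B) : lambda a (b + c) = lambda a b + lambda a c := by
  simpa only [lambda, add_assoc] using mul_add_eq a (a⁻¹ + b) c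

theorem lambda_inv_lambda (a b : B) : lambda a⁻¹ (lambda a b) = b := by
  rw [← lambda_mul, inv_mul_cancel, lambda_one_left]

theorem lambda_lambda_inv (a b : B) : lambda a (lambda a⁻¹ b) = b := by
  simpa using lambda_inv_lambda a⁻¹ b

theorem add_eq_mul_lambda (a b : B) : a + b = a * lambda a⁻¹ b := by
  rw [mul_eq_add_lambda, lambda_lambda_inv]

theorem add_lambda_inv (a : B) : a + lambda a a⁻¹ = 1 := by
  rw [← mul_eq_add_lambda, mul_inv_cancel]

theorem lambda_inv_add_one (a : B) : lambda a a⁻¹ + 1 = lambda a a⁻¹ :=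
  add_left_cancel (a := a) (by rw [← add_assoc, add_lambda_inv, one_add_one_s10])

theorem lambda_inv_add_self {a : B} (ha : a + 1 = a) : lambda a a⁻¹ + a = 1 :=
  add_left_cancel (a := a) (by rw [← add_assoc, add_lambda_inv, one_add, ha])

theorem add_eq_right_of_add_self {e : B} (he : e + e = e) (b : B) : e + b = b := by
  have hb : e + lambda e (e⁻¹ * b) = b := by rw [← mul_eq_add_lambda, mul_inv_cancel_left]
  rw [← hb, ← add_assoc, he]

theorem lambda_add_self (a : B) {e : B} (he : e + e = e) :
    lambda a e + lambda a e = lambda a e := by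
  rw [← lambda_add, he]

theorem inv_add_self {e : B} (he : e + e = e) : e⁻¹ + e⁻¹ = e⁻¹ := by
  have hinv : lambda e e⁻¹ = 1 := by
    rw [← add_eq_right_of_add_self he (lambda e e⁻¹), add_lambda_inv]
  apply mul_left_cancel (a := e)
  rw [mul_add_eq, hinv, mul_inv_cancel, one_add_one_s10]

theorem lambda_eq_mul {e : B} (he : e + e = e) (b : B) : lambda e b = e * b := by
  rw [lambda, add_eq_right_of_add_self (inv_add_self he)]

variable (B) in
def idempotents : Subgroup B where
  carrier := {e | e + e = e}
  mul_mem' {e f} he hf := by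
    change e * f + e * f = e * f
    simpa only [lambda_eq_mul he] using lambda_add_self e hf
  one_mem' := one_add_one_s10
  inv_mem' := inv_add_self

variable (B) in
def lambdaKer : Subgroup B where
  carrier := {b | ∀ e : B, e + e = e → lambda b e = e}
  mul_mem' ha hb e he := by rw [lambda_mul, hb e he, ha e he]
  one_mem' e _ := lambda_one_left e
  inv_mem' {b} hb e he := by
    simpa only [hb e he] using lambda_inv_lambda b e

instance : (lambdaKer B).Normal where
  conj_mem b hb a e he := by
    rw [lambda_mul, lambda_mul, hb _ (lambda_add_self _ he), lambda_lambda_inv]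

theorem exists_add_one_eq_iff {x : B} : (∃ c, c + 1 = x) ↔ x + 1 = x :=
  ⟨fun ⟨c, hc⟩ => hc ▸ add_one_add_one c, fun hx => ⟨x, hx⟩⟩

theorem inv_add_one_mul_mem_idempotents (a : B) : (a + 1)⁻¹ * a ∈ idempotents B := by
  rw [add_eq_mul_lambda, mul_inv_rev, inv_mul_cancel_right]
  exact inv_mem (lambda_add_self a⁻¹ one_add_one_s10)

theorem mul_eq_add_of_mem_lambdaKer {g e : B} (hg : g ∈ lambdaKer B) (he : e + e = e) :
    g * e = g + e := by
  rw [mul_eq_add_lambda, hg e he]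

theorem mul_add_one_of_mem_lambdaKer {g e : B} (hg : g ∈ lambdaKer B) (hg₁ : g + 1 = g)
    (he : e + e = e) : g * e + 1 = g := by
  rw [mul_eq_add_of_mem_lambdaKer hg he, add_assoc, add_eq_right_of_add_self he, hg₁]

theorem add_mem_lambdaKer (hK : ∀ b : B, b ∈ lambdaKer B ↔ b + 1 = b) (x : B) {y : B}
    (hy : y ∈ lambdaKer B) : x + y ∈ lambdaKer B :=
  (hK _).2 (by rw [add_assoc, (hK y).1 hy])

@[reducible]
def skewLeftBraceOfLambdaKer (hK : ∀ b : B, b ∈ lambdaKer B ↔ b + 1 = b) :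
    SkewLeftBrace (lambdaKer B) :=
  letI : Add (lambdaKer B) := ⟨fun x y => ⟨x + y, add_mem_lambdaKer hK x y.2⟩⟩
  letI : Zero (lambdaKer B) := ⟨1⟩
  letI : Neg (lambdaKer B) :=
    ⟨fun x => ⟨lambda x.1 x.1⁻¹, (hK _).2 (lambda_inv_add_one x.1)⟩⟩
  { toAddGroup := AddGroup.ofLeftAxioms
      (fun a b c => Subtype.ext (add_assoc a.1 b.1 c.1))
      (fun a => Subtype.ext (one_add a.1))
      (fun a => Subtype.ext (lambda_inv_add_self ((hK a).1 a.2)))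
    toGroup := inferInstance
    compat := fun a b c => Subtype.ext <| by
      change a.1 * (b.1 + c.1) = a.1 * b.1 + lambda a.1 a.1⁻¹ + a.1 * c.1
      rw [mul_add_eq, mul_eq_add_lambda a.1 c.1, add_assoc, ← add_assoc (lambda _ _),
        lambda_inv_add_self ((hK a).1 a.2), one_add] }

theorem conj_eq_mul_add_one (hK : ∀ b : B, b ∈ lambdaKer B ↔ b + 1 = b) {g e : B}
    (hg : g ∈ lambdaKer B) (he : e + e = e) : e * g * e⁻¹ = e * g + 1 := by
  have hconj : e * g * e⁻¹ ∈ lambdaKer B := Subgroup.Normal.conj_mem inferInstance g hg e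
  calc e * g * e⁻¹ = e * g * e⁻¹ * e + 1 :=
        (mul_add_one_of_mem_lambdaKer hconj ((hK _).1 hconj) he).symm
    _ = e * g + 1 := by rw [inv_mul_cancel_right]

theorem conj_add (hK : ∀ b : B, b ∈ lambdaKer B ↔ b + 1 = b) {x y e : B}
    (hx : x ∈ lambdaKer B) (hy : y ∈ lambdaKer B) (he : e + e = e) :
    e * (x + y) * e⁻¹ = e * x * e⁻¹ + e * y * e⁻¹ := by
  rw [conj_eq_mul_add_one hK (add_mem_lambdaKer hK x hy) he, conj_eq_mul_add_one hK hx he,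
    conj_eq_mul_add_one hK hy he, mul_add_eq, lambda_eq_mul he]
  simp only [add_assoc, one_add]

def decompEquiv (hK : ∀ b : B, b ∈ lambdaKer B ↔ b + 1 = b) :
    B ≃ lambdaKer B × idempotents B where
  toFun a := (⟨a + 1, (hK _).2 (add_one_add_one _)⟩,
    ⟨(a + 1)⁻¹ * a, inv_add_one_mul_mem_idempotents a⟩)
  invFun p := p.1 * p.2
  left_inv a := mul_inv_cancel_left (a + 1) a
  right_inv p := by
    have hp := mul_add_one_of_mem_lambdaKer p.1.2 ((hK _).1 p.1.2) p.2.2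
    ext <;> simp [hp]

theorem add_eq_add_one_add_mul (hK : ∀ b : B, b ∈ lambdaKer B ↔ b + 1 = b) (x y : B) :
    x + y = (x + 1 + (y + 1)) * ((y + 1)⁻¹ * y) := by
  have he := inv_add_one_mul_mem_idempotents y
  have hy₁ : y + 1 ∈ lambdaKer B := (hK _).2 (add_one_add_one _)
  rw [add_assoc x 1, one_add,
    mul_eq_add_of_mem_lambdaKer (add_mem_lambdaKer hK x hy₁) he, add_assoc,
    ← mul_eq_add_of_mem_lambdaKer hy₁ he, mul_inv_cancel_left]

section Semidirect

variable {A T : Type*} {α : T → A → A}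

theorem add_self_iff_fst_eq_zero [AddLeftCancelMonoid A] (f : B ≃ A × T)
    (hadd : ∀ x y : B, f (x + y) = ((f x).1 + (f y).1, (f y).2)) {e : B} :
    e + e = e ↔ (f e).1 = 0 := by
  rw [← f.injective.eq_iff, hadd, Prod.ext_iff]
  simp

theorem snd_apply_one [Mul A] [Group T] (f : B ≃ A × T)
    (hmul : ∀ x y : B, f (x * y) = ((f x).1 * α (f x).2 (f y).1, (f x).2 * (f y).2)) :
    (f 1).2 = 1 := by
  simpa using congrArg Prod.snd (hmul 1 1)

theorem exists_add_one_eq_iff_snd_eq_one [AddLeftCancelMonoid A] [Mul A] [Group T]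
    (f : B ≃ A × T)
    (hadd : ∀ x y : B, f (x + y) = ((f x).1 + (f y).1, (f y).2))
    (hmul : ∀ x y : B, f (x * y) = ((f x).1 * α (f x).2 (f y).1, (f x).2 * (f y).2)) {x : B} :
    (∃ c, c + 1 = x) ↔ (f x).2 = 1 := by
  rw [exists_add_one_eq_iff, ← f.injective.eq_iff, hadd, Prod.ext_iff,
    (add_self_iff_fst_eq_zero f hadd).1 one_add_one_s10, snd_apply_one f hmul]
  simp [eq_comm]

theorem apply_lambda [AddLeftCancelMonoid A] [Mul A] [Group T]
    (f : B ≃ A × T)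
    (hadd : ∀ x y : B, f (x + y) = ((f x).1 + (f y).1, (f y).2))
    (hmul : ∀ x y : B, f (x * y) = ((f x).1 * α (f x).2 (f y).1, (f x).2 * (f y).2))
    (b : B) {e : B} (he : e + e = e) : f (lambda b e) = (0, (f b).2 * (f e).2) := by
  have hb : (f b).1 * α (f b).2 (f b⁻¹).1 = 0 := by
    rw [← (add_self_iff_fst_eq_zero f hadd).1 one_add_one_s10, ← mul_inv_cancel b, hmul]
  rw [lambda, hmul, hadd, (add_self_iff_fst_eq_zero f hadd).1 he, add_zero, hb]

theorem lambda_eq_self_iff [AddLeftCancelMonoid A] [Mul A] [Group T]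
    (f : B ≃ A × T)
    (hadd : ∀ x y : B, f (x + y) = ((f x).1 + (f y).1, (f y).2))
    (hmul : ∀ x y : B, f (x * y) = ((f x).1 * α (f x).2 (f y).1, (f x).2 * (f y).2))
    {b e : B} (he : e + e = e) : lambda b e = e ↔ (f b).2 = 1 := by
  rw [← f.injective.eq_iff, apply_lambda f hadd hmul b he, Prod.ext_iff,
    (add_self_iff_fst_eq_zero f hadd).1 he]
  simp

theorem mem_lambdaKer_iff_of_equiv [AddLeftCancelMonoid A] [Mul A] [Group T]
    (f : B ≃ A × T)
    (hadd : ∀ x y : B, f (x + y) = ((f x).1 + (f y).1, (f y).2))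
    (hmul : ∀ x y : B, f (x * y) = ((f x).1 * α (f x).2 (f y).1, (f x).2 * (f y).2)) {b : B} :
    b ∈ lambdaKer B ↔ ∃ c, c + 1 = b := by
  rw [exists_add_one_eq_iff_snd_eq_one f hadd hmul]
  exact ⟨fun hb => (lambda_eq_self_iff f hadd hmul one_add_one_s10).1 (hb 1 one_add_one_s10),
    fun hb _ he => (lambda_eq_self_iff f hadd hmul he).2 hb⟩

end Semidirect

end LeftSemiBrace

open LeftSemiBrace in
/-- `G = Ker(λ|_E)` iff `B` is isomorphic to a semidirect product of a skew left brace `A`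
by a trivial left semi-brace `T`. -/
theorem stmt10 (B : Type u) [LeftSemiBrace B] :
    ({b : B | ∀ e : B, e + e = e → b * (b⁻¹ + e) = e} = {x : B | ∃ c : B, c + 1 = x}) ↔
    ∃ (A : Type u) (_ : SkewLeftBrace A) (T : Type u) (_ : Group T) (α : T → A → A),
      α 1 = id ∧
      (∀ t₁ t₂ : T, α (t₁ * t₂) = α t₁ ∘ α t₂) ∧
      (∀ (t : T) (x y : A), α t (x + y) = α t x + α t y) ∧
      (∀ (t : T) (x y : A), α t (x * y) = α t x * α t y) ∧
      ∃ f : B ≃ A × T,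
        (∀ x y : B, f (x + y) = ((f x).1 + (f y).1, (f y).2)) ∧
        (∀ x y : B, f (x * y) = ((f x).1 * α (f x).2 (f y).1, (f x).2 * (f y).2)) := by
  constructor
  · intro h
    have hK (b : B) : b ∈ lambdaKer B ↔ b + 1 = b :=
      (Set.ext_iff.1 h b).trans exists_add_one_eq_iff
    let := skewLeftBraceOfLambdaKer hK
    refine ⟨lambdaKer B, inferInstance, idempotents B, inferInstance,
      fun e => MulAut.conjNormal (e : B), ?_, ?_, ?_, ?_, decompEquiv hK, ?_, ?_⟩
    · funext x
      simp
    · intro e f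
      funext x
      simp
    · intro e x y
      exact Subtype.ext (conj_add hK x.2 y.2 e.2)
    · intro e x y
      exact map_mul _ x y
    · intro x y
      exact (Equiv.eq_symm_apply _).1 (add_eq_add_one_add_mul hK x y)
    · intro x y
      refine (Equiv.eq_symm_apply _).1 ?_
      change x * y = (x + 1) * ((x + 1)⁻¹ * x * (y + 1) * ((x + 1)⁻¹ * x)⁻¹) *
        ((x + 1)⁻¹ * x * ((y + 1)⁻¹ * y))
      group
  · rintro ⟨A, _, T, _, α, -, -, -, -, f, hadd, hmul⟩
    ext b
    exact mem_lambdaKer_iff_of_equiv f hadd hmul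
end

section
/- Let B be a left cancellative left semi-brace whose multiplicative group (B,∘) is abelian. Then B is isomorphic to the direct product of the trivial left semi-brace E and the skew left brace G. -/
namespace SBAux

variable {B : Type*} [LeftSemiBrace B]

lemma aa (a b c : B) : a + b + c = a + (b + c) := LeftSemiBrace.add_assoc' a b c
lemma lc {a b c : B} (h : a + b = a + c) : b = c := LeftSemiBrace.add_left_cancel' a b c h
lemma compat (a b c : B) : a * (b + c) = a * b + a * (a⁻¹ + c) := LeftSemiBrace.compat a b c

/-- λ_a(c) -/
def lam (a c : B) : B := a * (a⁻¹ + c)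

/-- φ(a) = λ_a(1), the idempotent part of `a`. -/
def phi (a : B) : B := lam a 1

lemma one_add (c : B) : 1 + c = c := by
  have h := compat (1:B) 1 c
  simp only [one_mul, inv_one] at h
  exact (lc h).symm

lemma mul_eq_add_lam (a c : B) : a * c = a + lam a c := by
  have h := compat a 1 c
  rw [one_add, mul_one] at h
  exact h

lemma add_phi (a : B) : a + phi a = a := by
  have h := mul_eq_add_lam a 1
  rw [mul_one] at h
  exact h.symm

lemma lam_comp (a b c : B) : lam a (lam b c) = lam (a * b) c := by
  have h1 : a * (b * c) = a * b + lam a (lam b c) := by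
    rw [mul_eq_add_lam b c]; exact compat a b (lam b c)
  have h2 : a * (b * c) = a * b + lam (a * b) c := by
    rw [← mul_assoc]; exact mul_eq_add_lam (a * b) c
  exact lc (h1.symm.trans h2)

lemma lam_one (c : B) : lam 1 c = c := by
  simp only [lam, inv_one, one_mul, one_add]

lemma lam_lam_inv (a c : B) : lam a (lam a⁻¹ c) = c := by
  rw [lam_comp, mul_inv_cancel, lam_one]

lemma phi_idem (a : B) : phi a + phi a = phi a := by
  have h := compat a (a⁻¹ + 1) 1
  rw [aa, one_add] at h
  exact h.symm

lemma phi_add (x y : B) : phi (x + y) = phi y := by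
  have h1 : x + (y + phi (x + y)) = x + y := by rw [← aa]; exact add_phi (x + y)
  have h2 : y + phi (x + y) = y := lc h1
  exact lc (h2.trans (add_phi y).symm)

lemma idem_add {e : B} (he : e + e = e) (d : B) : e + d = d := by
  have h : e + (e + d) = e + d := by rw [← aa, he]
  exact lc h

lemma phi_of_idem {e : B} (he : e + e = e) : phi e = e :=
  (idem_add he (phi e)).symm.trans (add_phi e)

lemma phi_one : phi (1 : B) = 1 := by
  simp only [phi, lam, inv_one, one_mul, one_add]

lemma lam_phi (x y : B) : lam x (phi y) = phi (x * y) := by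
  rw [phi, phi, lam_comp]

lemma addone_mul_idem (habel : ∀ a b : B, a * b = b * a)
    (b : B) {e : B} (he : e + e = e) : (b + 1) * e = b + e := by
  have h1 : (b + 1) * e = e * b + e := by
    rw [habel (b + 1) e, compat e b 1]
    rw [show e * (e⁻¹ + 1) = phi e from rfl, phi_of_idem he]
  have h2 : e * b + e = b + e := by
    rw [habel e b]
    have c1 : b * (e + lam b⁻¹ e) = b * e + lam b (lam b⁻¹ e) := compat b e (lam b⁻¹ e)
    rw [lam_lam_inv] at c1
    rw [← c1, idem_add he, mul_eq_add_lam, lam_lam_inv]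
  exact h1.trans h2

lemma phi_mul (habel : ∀ a b : B, a * b = b * a) (x y : B) :
    phi (x * y) = phi x * phi y := by
  have h := addone_mul_idem habel x⁻¹ (phi_idem y)
  calc phi (x * y) = x * (x⁻¹ + phi y) := (lam_phi x y).symm
    _ = x * ((x⁻¹ + 1) * phi y) := by rw [h]
    _ = (x * (x⁻¹ + 1)) * phi y := (mul_assoc _ _ _).symm
    _ = phi x * phi y := rfl

lemma phi_inv (habel : ∀ a b : B, a * b = b * a) (x : B) :
    phi x⁻¹ = (phi x)⁻¹ := by
  have h : phi x * phi x⁻¹ = 1 := by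
    rw [← phi_mul habel, mul_inv_cancel, phi_one]
  exact (inv_eq_of_mul_eq_one_right h).symm

lemma add_one_eq (x : B) : x + 1 = x * phi x⁻¹ := by
  have h := mul_eq_add_lam x (phi x⁻¹)
  rw [lam_phi, mul_inv_cancel, phi_one] at h
  exact h.symm

lemma comm4 (habel : ∀ a b : B, a * b = b * a) (a b c d : B) :
    a * b * (c * d) = a * c * (b * d) := by
  rw [mul_assoc, mul_assoc, ← mul_assoc b, habel b c, mul_assoc]

lemma mul_add_one (habel : ∀ a b : B, a * b = b * a) (x y : B) :
    x * y + 1 = (x + 1) * (y + 1) := by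
  rw [add_one_eq (x * y), add_one_eq x, add_one_eq y,
    comm4 habel x (phi x⁻¹) y (phi y⁻¹), mul_inv_rev, habel y⁻¹ x⁻¹,
    phi_mul habel x⁻¹ y⁻¹]

lemma phi_mul_add_one (habel : ∀ a b : B, a * b = b * a) (a : B) :
    phi a * (a + 1) = a := by
  rw [add_one_eq a, phi_inv habel, habel (phi a) (a * (phi a)⁻¹), mul_assoc,
    inv_mul_cancel, mul_one]

lemma phi_g {g : B} (hg : ∃ c : B, c + 1 = g) : phi g = 1 := by
  obtain ⟨c, rfl⟩ := hg
  rw [phi_add, phi_one]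

lemma phi_eg (habel : ∀ a b : B, a * b = b * a) {e g : B}
    (he : e + e = e) (hg : ∃ c : B, c + 1 = g) : phi (e * g) = e := by
  rw [phi_mul habel, phi_of_idem he, phi_g hg, mul_one]

lemma eg_add_one (habel : ∀ a b : B, a * b = b * a) {e g : B}
    (he : e + e = e) (hg : ∃ c : B, c + 1 = g) : e * g + 1 = g := by
  rw [add_one_eq (e * g), phi_inv habel, phi_eg habel he hg,
    habel e g, mul_assoc, mul_inv_cancel, mul_one]

lemma add_add_one (x y : B) : (x + y) + 1 = (x + 1) + (y + 1) := by
  rw [aa x 1, one_add, aa]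

end SBAux

/-- If `(B,∘)` is abelian, then `B` is isomorphic to the direct product of the trivial
left semi-brace `E` and the skew left brace `G` (both with operations inherited from `B`;
the addition on `E` is `a + b = b` and on `G` it is the restriction of `+`). -/
theorem stmt12 (B : Type*) [LeftSemiBrace B] (habel : ∀ a b : B, a * b = b * a) :
    ∃ f : B ≃ ({e : B // e + e = e} × {g : B // ∃ c : B, c + 1 = g}),
      (∀ x y : B,
        ((f (x + y)).1 : B) = (f y).1 ∧ ((f (x + y)).2 : B) = ((f x).2 : B) + ((f y).2 : B)) ∧
      (∀ x y : B,
        ((f (x * y)).1 : B) = ((f x).1 : B) * ((f y).1 : B) ∧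
        ((f (x * y)).2 : B) = ((f x).2 : B) * ((f y).2 : B)) := by
  refine ⟨{ toFun := fun a => (⟨SBAux.phi a, SBAux.phi_idem a⟩, ⟨a + 1, a, rfl⟩),
            invFun := fun p => (p.1 : B) * (p.2 : B),
            left_inv := fun a => SBAux.phi_mul_add_one habel a,
            right_inv := ?_ }, ?_, ?_⟩
  · rintro ⟨⟨e, he⟩, ⟨g, hg⟩⟩
    exact Prod.ext (Subtype.ext (SBAux.phi_eg habel he hg))
      (Subtype.ext (SBAux.eg_add_one habel he hg))
  · intro x y
    exact ⟨SBAux.phi_add x y, SBAux.add_add_one x y⟩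
  · intro x y
    exact ⟨SBAux.phi_mul habel x y, SBAux.mul_add_one habel x y⟩
end

section
/- Let B be a left cancellative left semi-brace such that (B,∘) is a cyclic group of prime-power order or an infinite cyclic group. Then B is a skew left brace (E = {0}) or B is a trivial left semi-brace (B = E). -/
namespace SemiBraceAux

variable {B : Type*} [LeftSemiBrace B]

lemma aassoc (a b c : B) : a + b + c = a + (b + c) := LeftSemiBrace.add_assoc' a b c

lemma acancel {a b c : B} (h : a + b = a + c) : b = c := LeftSemiBrace.add_left_cancel' a b c h

lemma compat (a b c : B) : a * (b + c) = a * b + a * (a⁻¹ + c) := LeftSemiBrace.compat a b c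

lemma one_add (x : B) : 1 + x = x := by
  have h := compat (1 : B) 1 x
  rw [one_mul, one_mul, inv_one, one_mul] at h
  exact (acancel h).symm

lemma dagger (a x : B) : a * x = a + a * (a⁻¹ + x) := by
  have h := compat a 1 x
  rwa [one_add, mul_one] at h

/-- If `x + 1 = 1` then `x` acts as a left zero for addition. -/
lemma left_zero {x : B} (h : x + 1 = 1) (y : B) : x + y = y := by
  conv_lhs => rw [← one_add y, ← aassoc, h, one_add]

lemma inv_add_one {e : B} (he : e + e = e) : e⁻¹ + 1 = 1 := by
  have h := dagger (e⁻¹) e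
  rw [inv_inv, he, inv_mul_cancel] at h
  exact h.symm

lemma inv_idem {e : B} (he : e + e = e) : e⁻¹ + e⁻¹ = e⁻¹ :=
  left_zero (inv_add_one he) _

lemma idem_add_one {e : B} (he : e + e = e) : e + 1 = 1 := by
  have h := inv_add_one (inv_idem he)
  rwa [inv_inv] at h

lemma idem_mul {e f : B} (he : e + e = e) (hf : f + f = f) : e * f + e * f = e * f := by
  apply left_zero
  have h := compat e f e⁻¹
  rw [inv_idem he, left_zero (idem_add_one hf) e⁻¹, mul_inv_cancel] at h
  exact h.symm

lemma inv_mem_A {a : B} (ha : a + 1 = a) : a⁻¹ + 1 = a⁻¹ := by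
  have h := dagger (a⁻¹) (1 : B)
  rw [inv_inv, ha, mul_one, inv_mul_cancel] at h
  exact h.symm

lemma mul_mem_A {a b : B} (ha : a + 1 = a) (hb : b + 1 = b) : a * b + 1 = a * b := by
  have h := compat a b 1
  rw [hb, inv_mem_A ha, mul_inv_cancel] at h
  exact h.symm

/-- The additive idempotents form a subgroup of `(B, ∘)`. -/
def Esub (B : Type*) [LeftSemiBrace B] : Subgroup B where
  carrier := {x | x + x = x}
  one_mem' := (one_add 1)
  mul_mem' := fun hx hy => idem_mul hx hy
  inv_mem' := fun hx => inv_idem hx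

/-- The elements with `a + 1 = a` form a subgroup of `(B, ∘)`. -/
def Asub (B : Type*) [LeftSemiBrace B] : Subgroup B where
  carrier := {x | x + 1 = x}
  one_mem' := (one_add 1)
  mul_mem' := fun hx hy => mul_mem_A hx hy
  inv_mem' := fun hx => inv_mem_A hx

lemma mem_Esub {x : B} : x ∈ Esub B ↔ x + x = x := Iff.rfl
lemma mem_Asub {x : B} : x ∈ Asub B ↔ x + 1 = x := Iff.rfl

/-- In a cyclic group of prime power order or infinite cyclic group, if two subgroups
intersect trivially and one contains a nontrivial element, the other is trivial. -/
lemma cyclic_key {G : Type*} [Group G] (hcyc : IsCyclic G)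
    (hcard : (∃ p n : ℕ, p.Prime ∧ Nat.card G = p ^ n) ∨ Infinite G)
    (H K : Subgroup G) (hdisj : ∀ x, x ∈ H → x ∈ K → x = 1)
    {h k : G} (hH : h ∈ H) (hK : k ∈ K) (hh : h ≠ 1) : k = 1 := by
  by_contra hk1
  haveI := hcyc
  rcases hcard with ⟨p, n, hp, hcardeq⟩ | hinf
  · -- finite, prime power case
    haveI : Finite G := Nat.finite_of_card_ne_zero (by
      rw [hcardeq]; exact pow_ne_zero _ hp.pos.ne')
    haveI : Fintype G := Fintype.ofFinite G
    -- from any nontrivial element, produce an element of order p in its zpowers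
    have claim : ∀ x : G, x ≠ 1 → ∃ y, y ∈ Subgroup.zpowers x ∧ orderOf y = p := by
      intro x hx
      have hdvd : orderOf x ∣ p ^ n := by rw [← hcardeq]; exact orderOf_dvd_natCard x
      obtain ⟨s, hs, hxs⟩ := (Nat.dvd_prime_pow hp).mp hdvd
      have hs0 : s ≠ 0 := by
        rintro rfl
        exact hx (orderOf_eq_one_iff.mp (by simpa using hxs))
      obtain ⟨t, rfl⟩ := Nat.exists_eq_succ_of_ne_zero hs0
      refine ⟨x ^ (p ^ t), Subgroup.pow_mem _ (Subgroup.mem_zpowers x) _, ?_⟩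
      have hyp : (x ^ (p ^ t)) ^ p = 1 := by
        rw [← pow_mul, ← pow_succ, ← hxs, pow_orderOf_eq_one]
      have hy1 : x ^ (p ^ t) ≠ 1 := by
        intro h1
        have := orderOf_dvd_of_pow_eq_one h1
        rw [hxs] at this
        exact absurd (Nat.le_of_dvd (pow_pos hp.pos _) this)
          (not_le.mpr (Nat.pow_lt_pow_succ hp.one_lt))
      rcases hp.eq_one_or_self_of_dvd _ (orderOf_dvd_of_pow_eq_one hyp) with h1 | h1
      · exact absurd (orderOf_eq_one_iff.mp h1) hy1
      · exact h1
    obtain ⟨h', hh'mem, hh'ord⟩ := claim h hh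
    obtain ⟨k', hk'mem, hk'ord⟩ := claim k hk1
    have hh'H : h' ∈ H := Subgroup.zpowers_le.mpr hH hh'mem
    have hk'K : k' ∈ K := Subgroup.zpowers_le.mpr hK hk'mem
    classical
    have hT : (Finset.univ.filter (fun a : G => a ^ p = 1)).card ≤ p := by
      have := hcyc.card_pow_eq_one_le (α := G) (n := p) hp.pos
      convert this using 2
    set I : Finset G := (Finset.range p).image (h' ^ ·) with hI
    have hIT : I ⊆ Finset.univ.filter (fun a : G => a ^ p = 1) := by
      intro a ha
      rw [hI, Finset.mem_image] at ha
      obtain ⟨i, _, rfl⟩ := ha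
      rw [Finset.mem_filter]
      refine ⟨Finset.mem_univ _, ?_⟩
      rw [← pow_mul, mul_comm, pow_mul, ← hh'ord, pow_orderOf_eq_one, one_pow]
    have hIcard : I.card = p := by
      rw [hI, Finset.card_image_of_injOn, Finset.card_range]
      intro i hi j hj hij
      exact pow_injOn_Iio_orderOf (by simpa [hh'ord] using hi) (by simpa [hh'ord] using hj) hij
    have hTI : Finset.univ.filter (fun a : G => a ^ p = 1) = I :=
      (Finset.eq_of_subset_of_card_le hIT (by rw [hIcard]; exact hT)).symm
    have hk'T : k' ∈ Finset.univ.filter (fun a : G => a ^ p = 1) := by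
      rw [Finset.mem_filter]
      exact ⟨Finset.mem_univ _, by rw [← hk'ord, pow_orderOf_eq_one]⟩
    rw [hTI, hI, Finset.mem_image] at hk'T
    obtain ⟨i, _, hik⟩ := hk'T
    have hk'H : k' ∈ H := by rw [← hik]; exact Subgroup.pow_mem _ hh'H _
    have : k' = 1 := hdisj k' hk'H hk'K
    rw [this, orderOf_one] at hk'ord
    exact hp.one_lt.ne hk'ord
  · -- infinite cyclic case
    obtain ⟨g, hg⟩ := hcyc.exists_generator
    have hord : orderOf g = 0 := Infinite.orderOf_eq_zero_of_forall_mem_zpowers hg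
    obtain ⟨m, hm⟩ := Subgroup.mem_zpowers_iff.mp (hg h)
    obtain ⟨l, hl⟩ := Subgroup.mem_zpowers_iff.mp (hg k)
    have hm0 : m ≠ 0 := by rintro rfl; exact hh (by simpa using hm.symm)
    have hl0 : l ≠ 0 := by rintro rfl; exact hk1 (by simpa using hl.symm)
    have hmem : h ^ l ∈ H := Subgroup.zpow_mem H hH l
    have heq : h ^ l = k ^ m := by
      rw [← hm, ← hl, ← zpow_mul, ← zpow_mul, mul_comm]
    have hmemK : h ^ l ∈ K := heq ▸ Subgroup.zpow_mem K hK m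
    have h1 : h ^ l = 1 := hdisj _ hmem hmemK
    rw [← hm, ← zpow_mul] at h1
    have := zpow_eq_one_iff_modEq.mp h1
    rw [hord] at this
    have : (m * l : ℤ) = 0 := by
      have h0 := (Int.modEq_iff_dvd.mp this.symm)
      simpa using h0
    exact (mul_ne_zero hm0 hl0) this

end SemiBraceAux

open SemiBraceAux in
/-- If `(B,∘)` is a cyclic group of prime-power order or an infinite cyclic group, then
`B` is a skew left brace (the only additive idempotent is the neutral element) or `B` is a
trivial left semi-brace (`a + b = b` for all `a, b`). -/
theorem stmt13 (B : Type*) [LeftSemiBrace B] (hcyc : IsCyclic B)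
    (hcard : (∃ p n : ℕ, p.Prime ∧ Nat.card B = p ^ n) ∨ Infinite B) :
    (∀ e : B, e + e = e → e = 1) ∨ (∀ a b : B, a + b = b) := by
  by_cases hE : ∀ e : B, e + e = e → e = 1
  · exact Or.inl hE
  · push_neg at hE
    obtain ⟨e, he, he1⟩ := hE
    right
    have hdisj : ∀ x : B, x ∈ Esub B → x ∈ Asub B → x = 1 := by
      intro x hx ha
      exact acancel ((mem_Esub.mp hx).trans (mem_Asub.mp ha).symm)
    have key : ∀ b : B, b + 1 = 1 := by
      intro b
      have hbA : b + 1 ∈ Asub B := by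
        rw [mem_Asub, aassoc, one_add]
      exact cyclic_key hcyc hcard (Esub B) (Asub B) hdisj (mem_Esub.mpr he) hbA he1
    intro a b
    conv_lhs => rw [← one_add b, ← aassoc, key a, one_add]
end

section
/- Let B be a left cancellative left semi-brace of size 2p², p an odd prime, with |E| = 2. Then G = Ker(λ|_E), and B is isomorphic to the semidirect product of a skew left brace G of size p² by the trivial left semi-brace E. -/
namespace SB15

variable {B : Type*} [LeftSemiBrace B]

lemma aa (a b c : B) : a + b + c = a + (b + c) := LeftSemiBrace.add_assoc' a b c
lemma lcan {a b c : B} (h : a + b = a + c) : b = c := LeftSemiBrace.add_left_cancel' a b c h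
lemma comp (a b c : B) : a * (b + c) = a * b + a * (a⁻¹ + c) := LeftSemiBrace.compat a b c
def lam (a b : B) : B := a * (a⁻¹ + b)
lemma comp' (a b c : B) : a * (b + c) = a * b + lam a c := comp a b c
lemma one_add (c : B) : 1 + c = c := by
  have h := comp 1 c c
  simp only [one_mul, inv_one] at h
  exact (lcan h).symm
lemma lam_one (b : B) : lam 1 b = b := by simp [lam, one_add]
lemma lam_add (a b c : B) : lam a (b + c) = lam a b + lam a c := by
  show a * (a⁻¹ + (b + c)) = lam a b + lam a c
  rw [← aa]
  exact comp' a (a⁻¹ + b) c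
lemma lam_inj (a : B) : Function.Injective (lam a) :=
  fun x y h => lcan (mul_left_cancel (show a * (a⁻¹ + x) = a * (a⁻¹ + y) from h))
lemma lam_mul (a b c : B) : lam (a * b) c = lam a (lam b c) := by
  have h1 : b * ((a * b)⁻¹ + c) = a⁻¹ + lam b c := by
    rw [comp' b (a*b)⁻¹ c, mul_inv_rev, ← mul_assoc, mul_inv_cancel, one_mul]
  calc lam (a*b) c = (a*b) * ((a*b)⁻¹ + c) := rfl
    _ = a * (b * ((a*b)⁻¹ + c)) := by rw [mul_assoc]
    _ = a * (a⁻¹ + lam b c) := by rw [h1]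
    _ = lam a (lam b c) := rfl
lemma mul_eq_add_lam (a c : B) : a * c = a + lam a c := by
  have h := comp' a 1 c
  rwa [one_add, mul_one] at h
lemma add_lam_one (a : B) : a + lam a 1 = a := by rw [← mul_eq_add_lam, mul_one]
lemma mem_iff (a : B) : a + 1 = a ↔ lam a 1 = 1 := by
  constructor
  · intro h
    exact lcan (show a + lam a 1 = a + 1 by rw [add_lam_one, h])
  · intro h
    rw [← h, add_lam_one]
lemma idem_add {e : B} (f : B) (he : e + e = e) : e + f = f :=
  lcan (show e + (e + f) = e + f by rw [← aa, he])
lemma lam_idem (a : B) {e : B} (he : e + e = e) : lam a e + lam a e = lam a e := by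
  rw [← lam_add, he]
lemma mul_idem {e f : B} (he : e + e = e) (hf : f + f = f) : e * f + e * f = e * f := by
  rw [mul_eq_add_lam e f]
  have h1 : lam e f + lam e f = lam e f := lam_idem e hf
  have h2 : lam e f + e = e := idem_add e h1
  calc (e + lam e f) + (e + lam e f)
      = e + (lam e f + e + lam e f) := by rw [aa, aa]
    _ = e + (e + lam e f) := by rw [h2]
    _ = (e + e) + lam e f := by rw [aa]
    _ = e + lam e f := by rw [he]

def Gr (B : Type*) [LeftSemiBrace B] : Subgroup B where
  carrier := {x | x + 1 = x}
  one_mem' := one_add 1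
  mul_mem' := by
    intro a b ha hb
    exact (mem_iff _).mpr (by rw [lam_mul, (mem_iff b).mp hb, (mem_iff a).mp ha])
  inv_mem' := by
    intro a ha
    refine (mem_iff _).mpr ?_
    calc lam a⁻¹ 1 = lam a⁻¹ (lam a 1) := by rw [(mem_iff a).mp ha]
      _ = lam (a⁻¹ * a) 1 := (lam_mul _ _ _).symm
      _ = 1 := by rw [inv_mul_cancel, lam_one]

lemma mem_Gr {x : B} : x ∈ Gr B ↔ x + 1 = x := Iff.rfl

section Two

variable {u : B} (hu : u + u = u) (hu1 : u ≠ 1)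
  (hall : ∀ e : B, e + e = e → e = 1 ∨ e = u)

include hu hu1 hall in
lemma lam_fix {g : B} (hg : g + 1 = g) {e : B} (he : e + e = e) : lam g e = e := by
  rcases hall e he with rfl | rfl
  · exact (mem_iff g).mp hg
  · rcases hall _ (lam_idem g hu) with h | h
    · exact absurd (lam_inj g (h.trans ((mem_iff g).mp hg).symm)) hu1
    · exact h

include hu in
lemma lam_u_one : lam u 1 = u := lcan ((add_lam_one u).trans hu.symm)

include hu hu1 hall in
lemma u_mul_u : u * u = 1 := by
  rcases hall _ (mul_idem hu hu) with h | h
  · exact h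
  · exact absurd (mul_left_cancel (h.trans (mul_one u).symm)) hu1

include hu hu1 hall in
lemma u_inv : u⁻¹ = u := inv_eq_of_mul_eq_one_right (u_mul_u hu hu1 hall)

include hu hu1 hall in
lemma lam_u_u : lam u u = 1 := by
  have h : lam u (lam u 1) = lam (u * u) 1 := (lam_mul u u 1).symm
  rwa [lam_u_one hu, u_mul_u hu hu1 hall, lam_one] at h

include hu hu1 hall in
lemma conj_mem {e g : B} (he : e + e = e) (hg : g + 1 = g) : e * g * e⁻¹ + 1 = e * g * e⁻¹ := by
  rcases hall e he with rfl | rfl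
  · simpa using hg
  · rw [mem_iff, u_inv hu hu1 hall, lam_mul, lam_u_one hu, lam_mul,
      lam_fix hu hu1 hall hg hu, lam_u_u hu hu1 hall]

include hu hu1 hall in
lemma idem_mul_g {g e : B} (hg : g + 1 = g) (he : e + e = e) : g * e = g + e := by
  rw [mul_eq_add_lam, lam_fix hu hu1 hall hg he]

/-- The subgroup `E` of `(B, ∘)`. -/
def Er : Subgroup B where
  carrier := {e | e + e = e}
  one_mem' := one_add 1
  mul_mem' := fun ha hb => mul_idem ha hb
  inv_mem' := by
    intro a ha
    rcases hall a ha with rfl | rfl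
    · simpa using one_add (1 : B)
    · rw [u_inv hu hu1 hall]; exact hu

include hu hu1 hall in
lemma conj_add {e g h : B} (he : e + e = e) (hg : g + 1 = g) (hh : h + 1 = h) :
    e * (g + h) * e⁻¹ = e * g * e⁻¹ + e * h * e⁻¹ := by
  have hgh : (g + h) + 1 = g + h := by rw [aa, hh]
  have key : ∀ {x : B}, x + 1 = x → e * x = (e * x * e⁻¹) + e := by
    intro x hx
    rw [← idem_mul_g hu hu1 hall (conj_mem hu hu1 hall he hx) he, mul_assoc, mul_assoc,
      inv_mul_cancel, mul_one]
  have h5 : e * h = e + lam e h := mul_eq_add_lam e h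
  have h6 : e + lam e h = e * h * e⁻¹ + e := by rw [← h5]; exact key hh
  have hmain : e * (g + h) * e⁻¹ + e = (e * g * e⁻¹ + e * h * e⁻¹) + e := by
    calc e * (g + h) * e⁻¹ + e = e * (g + h) := (key hgh).symm
      _ = e * g + lam e h := comp' e g h
      _ = (e * g * e⁻¹ + e) + lam e h := congrArg (fun t => t + lam e h) (key hg)
      _ = e * g * e⁻¹ + (e + lam e h) := aa _ _ _
      _ = e * g * e⁻¹ + (e * h * e⁻¹ + e) := by rw [h6]
      _ = (e * g * e⁻¹ + e * h * e⁻¹) + e := (aa _ _ _).symm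
  have hA : e * (g + h) * e⁻¹ + (e + 1) = (e * g * e⁻¹ + e * h * e⁻¹) + (e + 1) := by
    rw [← aa, ← aa, hmain]
  rw [idem_add 1 he] at hA
  rw [conj_mem hu hu1 hall he hgh] at hA
  have hsum : (e * g * e⁻¹ + e * h * e⁻¹) + 1 = e * g * e⁻¹ + e * h * e⁻¹ := by
    rw [aa, conj_mem hu hu1 hall he hh]
  rwa [hsum] at hA

end Two

section Fin

variable [Finite B]

lemma add_surj (a : B) : Function.Surjective (fun x : B => a + x) :=
  Finite.injective_iff_surjective.mp fun x y h => lcan h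

/-- The idempotent part of `b`. -/
noncomputable def ep (b : B) : B := (add_surj b b).choose

lemma add_ep (b : B) : b + ep b = b := (add_surj b b).choose_spec

lemma ep_unique {b y : B} (h : b + y = b) : y = ep b := lcan (h.trans (add_ep b).symm)

lemma ep_idem (b : B) : ep b + ep b = ep b :=
  ep_unique (show b + (ep b + ep b) = b by rw [← aa, add_ep, add_ep])

/-- `G` with the addition of `B`. -/
noncomputable def addG (x y : ↥(Gr B)) : ↥(Gr B) :=
  ⟨x.1 + y.1, show (x.1 + y.1) + 1 = x.1 + y.1 by rw [aa, y.2]⟩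

lemma addG_inj (x : ↥(Gr B)) : Function.Injective (addG x) :=
  fun a b h => Subtype.ext (lcan (congrArg Subtype.val h))

noncomputable def negG (x : ↥(Gr B)) : ↥(Gr B) :=
  ((Finite.injective_iff_surjective.mp (addG_inj x)) ⟨1, one_add 1⟩).choose

lemma add_negG (x : ↥(Gr B)) : x.1 + (negG x).1 = 1 :=
  congrArg Subtype.val (((Finite.injective_iff_surjective.mp (addG_inj x)) ⟨1, one_add 1⟩).choose_spec)

noncomputable instance instAddG : Add ↥(Gr B) := ⟨addG⟩
instance instZeroG : Zero ↥(Gr B) := ⟨⟨1, one_add 1⟩⟩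
noncomputable instance instNegG : Neg ↥(Gr B) := ⟨negG⟩

noncomputable def addGroupG : AddGroup ↥(Gr B) where
  add := addG
  zero := ⟨1, one_add 1⟩
  neg := negG
  nsmul := nsmulRec
  zsmul := zsmulRec
  add_assoc a b c := Subtype.ext (aa a.1 b.1 c.1)
  zero_add a := Subtype.ext (one_add a.1)
  add_zero a := Subtype.ext a.2
  neg_add_cancel a := by
    refine Subtype.ext (lcan (a := a.1) ?_)
    show a.1 + ((negG a).1 + a.1) = a.1 + 1
    rw [← aa, add_negG, one_add]
    exact (show a.1 + 1 = a.1 from a.2).symm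

noncomputable def skewG : SkewLeftBrace ↥(Gr B) where
  toAddGroup := addGroupG
  toGroup := inferInstance
  compat a b c := by
    refine Subtype.ext ?_
    show a.1 * (b.1 + c.1) = (a.1 * b.1 + (negG a).1) + a.1 * c.1
    have hl : (negG a).1 + a.1 * c.1 = lam a.1 c.1 := by
      refine lcan (a := a.1) ?_
      rw [← aa, add_negG, one_add, mul_eq_add_lam]
    rw [comp', aa, hl]

variable {u : B} (hu : u + u = u) (hu1 : u ≠ 1)
  (hall : ∀ e : B, e + e = e → e = 1 ∨ e = u)

/-- The decomposition `B ≃ G × E` (as sets). -/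
noncomputable def fdec : B ≃ ↥(Gr B) × ↥(Er hu hu1 hall) where
  toFun b := (⟨b + 1, show (b + 1) + 1 = b + 1 by rw [aa, one_add]⟩, ⟨ep b, ep_idem b⟩)
  invFun p := p.1.1 + p.2.1
  left_inv b := by
    show (b + 1) + ep b = b
    rw [aa, one_add, add_ep]
  right_inv p := by
    have h1 : (p.1.1 + p.2.1) + 1 = p.1.1 := by
      rw [aa, idem_add 1 p.2.2]
      exact p.1.2
    have h2 : (p.1.1 + p.2.1) + p.2.1 = p.1.1 + p.2.1 := by rw [aa, p.2.2]
    exact Prod.ext (Subtype.ext h1) (Subtype.ext (ep_unique h2).symm)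

/-- The conjugation action of `E` on `G`. -/
noncomputable def alphaE (t : ↥(Er hu hu1 hall)) (a : ↥(Gr B)) : ↥(Gr B) :=
  ⟨t.1 * a.1 * t.1⁻¹, conj_mem hu hu1 hall t.2 a.2⟩

end Fin

end SB15

universe u

/-- If `|B| = 2p²` with `p` an odd prime and `|E| = 2`, then `G = Ker(λ|_E)` and `B` is
isomorphic to the semidirect product of a skew left brace of size `p²` by a trivial
left semi-brace of size `2`. -/
theorem stmt15 (B : Type u) [LeftSemiBrace B] (p : ℕ) (hp : p.Prime) (hodd : p ≠ 2)
    (hcard : Nat.card B = 2 * p ^ 2)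
    (hE : Nat.card {e : B | e + e = e} = 2) :
    ({b : B | ∀ e : B, e + e = e → b * (b⁻¹ + e) = e} = {x : B | ∃ c : B, c + 1 = x}) ∧
    ∃ (A : Type u) (_ : SkewLeftBrace A) (T : Type u) (_ : Group T) (α : T → A → A),
      Nat.card A = p ^ 2 ∧ Nat.card T = 2 ∧
      α 1 = id ∧
      (∀ t₁ t₂ : T, α (t₁ * t₂) = α t₁ ∘ α t₂) ∧
      (∀ (t : T) (x y : A), α t (x + y) = α t x + α t y) ∧
      (∀ (t : T) (x y : A), α t (x * y) = α t x * α t y) ∧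
      ∃ f : B ≃ A × T,
        (∀ x y : B, f (x + y) = ((f x).1 + (f y).1, (f y).2)) ∧
        (∀ x y : B, f (x * y) = ((f x).1 * α (f x).2 (f y).1, (f x).2 * (f y).2)) := by
  classical
  open SB15 in
  haveI hfin : Finite B := Nat.finite_of_card_ne_zero (by
    rw [hcard]
    have := hp.pos
    positivity)
  have hEn : {e : B | e + e = e}.ncard = 2 := by
    rw [← Nat.card_coe_set_eq]; exact hE
  obtain ⟨v, w, hvw, hset⟩ := Set.ncard_eq_two.mp hEn
  have hmem : ∀ e : B, e + e = e ↔ e ∈ ({v, w} : Set B) := by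
    intro e
    rw [← hset]
    exact Iff.rfl
  obtain ⟨z, hu, hu1, hall⟩ : ∃ z : B, z + z = z ∧ z ≠ 1 ∧ ∀ e : B, e + e = e → e = 1 ∨ e = z := by
    have h1 : (1 : B) = v ∨ (1 : B) = w := by
      simpa [Set.mem_insert_iff, Set.mem_singleton_iff] using (hmem 1).mp (one_add 1)
    rcases h1 with h1 | h1
    · refine ⟨w, (hmem w).mpr (by simp), fun h => hvw (by rw [← h1, h]), fun e he => ?_⟩
      rcases (by simpa [Set.mem_insert_iff, Set.mem_singleton_iff] using (hmem e).mp he :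
          e = v ∨ e = w) with h | h
      · exact Or.inl (by rw [h, ← h1])
      · exact Or.inr h
    · refine ⟨v, (hmem v).mpr (by simp), fun h => hvw (by rw [h, ← h1]), fun e he => ?_⟩
      rcases (by simpa [Set.mem_insert_iff, Set.mem_singleton_iff] using (hmem e).mp he :
          e = v ∨ e = w) with h | h
      · exact Or.inr h
      · exact Or.inl (by rw [h, ← h1])
  have cardT : Nat.card ↥(Er hu hu1 hall) = 2 := hE
  constructor
  · ext x
    simp only [Set.mem_setOf_eq]
    constructor
    · intro hx
      exact ⟨x, (mem_iff x).mpr (hx 1 (one_add 1))⟩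
    · rintro ⟨c, rfl⟩ e he
      exact lam_fix hu hu1 hall (show (c + 1) + 1 = c + 1 by rw [aa, one_add]) he
  · refine ⟨↥(Gr B), skewG, ↥(Er hu hu1 hall), inferInstance, alphaE hu hu1 hall,
      ?_, cardT, ?_, ?_, ?_, ?_, fdec hu hu1 hall, ?_, ?_⟩
    · -- cardinality of A
      have hc := Nat.card_congr (fdec hu hu1 hall (B := B))
      rw [Nat.card_prod, hcard, cardT] at hc
      have hq : 0 < p ^ 2 := pow_pos hp.pos 2
      omega
    · -- α 1 = id
      funext a
      apply Subtype.ext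
      show (1 : B) * a.1 * (1 : B)⁻¹ = a.1
      simp
    · intro t₁ t₂
      funext a
      apply Subtype.ext
      show (t₁.1 * t₂.1) * a.1 * (t₁.1 * t₂.1)⁻¹ = t₁.1 * (t₂.1 * a.1 * t₂.1⁻¹) * t₁.1⁻¹
      group
    · intro t x y
      apply Subtype.ext
      exact conj_add hu hu1 hall t.2 x.2 y.2
    · intro t x y
      apply Subtype.ext
      show t.1 * (x.1 * y.1) * t.1⁻¹ = (t.1 * x.1 * t.1⁻¹) * (t.1 * y.1 * t.1⁻¹)
      group
    · -- additive formula
      intro x y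
      refine Prod.ext (Subtype.ext ?_) (Subtype.ext ?_)
      · show (x + y) + 1 = (x + 1) + (y + 1)
        calc (x + y) + 1 = x + (y + 1) := aa _ _ _
          _ = x + (1 + (y + 1)) := by rw [one_add]
          _ = (x + 1) + (y + 1) := (aa _ _ _).symm
      · show ep (x + y) = ep y
        exact (ep_unique (show (x + y) + ep y = x + y by rw [aa, add_ep])).symm
    · -- multiplicative formula
      intro x y
      have hgx : (x + 1) + 1 = x + 1 := by rw [aa, one_add]
      have hgy : (y + 1) + 1 = y + 1 := by rw [aa, one_add]
      have hex : ep x + ep x = ep x := ep_idem x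
      have hey : ep y + ep y = ep y := ep_idem y
      have hxdec : (x + 1) * ep x = x := by
        rw [idem_mul_g hu hu1 hall hgx hex, aa, one_add, add_ep]
      have hydec : (y + 1) * ep y = y := by
        rw [idem_mul_g hu hu1 hall hgy hey, aa, one_add, add_ep]
      have hG' : ((x + 1) * (ep x * (y + 1) * (ep x)⁻¹)) + 1
          = (x + 1) * (ep x * (y + 1) * (ep x)⁻¹) :=
        (Gr B).mul_mem (show x + 1 ∈ Gr B from hgx)
          (show ep x * (y + 1) * (ep x)⁻¹ ∈ Gr B from conj_mem hu hu1 hall hex hgy)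
      have hE' : (ep x * ep y) + (ep x * ep y) = ep x * ep y := mul_idem hex hey
      have hprod : ((x + 1) * (ep x * (y + 1) * (ep x)⁻¹)) * (ep x * ep y) = x * y := by
        calc ((x + 1) * (ep x * (y + 1) * (ep x)⁻¹)) * (ep x * ep y)
            = ((x + 1) * ep x) * ((y + 1) * ep y) := by group
          _ = x * y := by rw [hxdec, hydec]
      have hsum : x * y = ((x + 1) * (ep x * (y + 1) * (ep x)⁻¹)) + (ep x * ep y) := by
        rw [← idem_mul_g hu hu1 hall hG' hE', hprod]
      refine Prod.ext (Subtype.ext ?_) (Subtype.ext ?_)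
      · show (x * y) + 1 = (x + 1) * (ep x * (y + 1) * (ep x)⁻¹)
        rw [hsum, aa, idem_add 1 hE', hG']
      · show ep (x * y) = ep x * ep y
        refine (ep_unique ?_).symm
        rw [hsum, aa, hE']
end

section
/- Let B = G ⋊_α E be the semidirect product left semi-brace of a trivial skew left brace G by a trivial left semi-brace E. Then b^{(3)} = 0 for every b ∈ B, where b^{(1)} := b and b^{(n+1)} := b^{(n)}·b with a·b := λ_a(a⁻) + a∘b + λ_b(b⁻). In particular, B is right nil. -/
variable {G E : Type*} [Group G] [Group E]

/- Here `G` is a trivial skew left brace: its addition coincides with its group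
multiplication, so we use `*` for both; `E` carries the trivial semi-brace addition
`e₁ + e₂ = e₂`. The semidirect product `B = G ⋊_α E` has
`(g₁,e₁)+(g₂,e₂) = (g₁*g₂, e₂)` and `(g₁,e₁)∘(g₂,e₂) = (g₁ * α_{e₁}(g₂), e₁*e₂)`. -/

/-- Addition of `B = G ⋊_α E` (with `G` a trivial skew left brace). -/
def tAdd (x y : G × E) : G × E := (x.1 * y.1, y.2)

/-- Multiplication of `B = G ⋊_α E`. -/
def tMul (α : E →* MulAut G) (x y : G × E) : G × E := (x.1 * α x.2 y.1, x.2 * y.2)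

/-- Multiplicative inverse in `B = G ⋊_α E`. -/
def tInv (α : E →* MulAut G) (x : G × E) : G × E := (α x.2⁻¹ x.1⁻¹, x.2⁻¹)

/-- The lambda map `λ_a(b) = a ∘ (a⁻ + b)` of `B`. -/
def tLam (α : E →* MulAut G) (a b : G × E) : G × E := tMul α a (tAdd (tInv α a) b)

/-- The operation `a · b = λ_a(a⁻) + a∘b + λ_b(b⁻)` of `B`. -/
def tDot (α : E →* MulAut G) (a b : G × E) : G × E :=
  tAdd (tAdd (tLam α a (tInv α a)) (tMul α a b)) (tLam α b (tInv α b))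

lemma aux1 (α : E →* MulAut G) (e : E) (g : G) : α e (α e⁻¹ g) = g := by
  rw [← MulAut.mul_apply]; simp

lemma aux2 (α : E →* MulAut G) (e : E) (g : G) : α e⁻¹ (α e g) = g := by
  rw [← MulAut.mul_apply]; simp

/-- If `G` is a trivial skew left brace, then in `B = G ⋊_α E` every element satisfies
`b⁽³⁾ = (b·b)·b = 0`; in particular `B` is right nil. -/
theorem stmt17 (α : E →* MulAut G) :
    ∀ b : G × E, tDot α (tDot α b b) b = (1, 1) := by
  rintro ⟨g, e⟩
  simp only [tDot, tLam, tMul, tAdd, tInv, map_mul, aux1 α, aux2 α, Prod.mk.injEq]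
  constructor
  · group
    simp only [zpow_neg, zpow_one, ← map_mul, mul_inv_cancel, map_one, MulAut.one_apply]
    group
  · group
end

section
/- Let B = G ⋊_α E be a semidirect product left semi-brace of a skew left brace G by a trivial left semi-brace E (via skew brace automorphisms α_e). Then B is right nilpotent if and only if α_e = id_G for all e ∈ E and G is a right nilpotent skew left brace. -/
variable {G E : Type*} [SkewLeftBrace G] [Group E]

/-- Addition of the semidirect product semi-brace `B = G ⋊_α E`. -/
def spAdd (x y : G × E) : G × E := (x.1 + y.1, y.2)

/-- Multiplication of `B = G ⋊_α E`. -/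
def spMul (α : E → G → G) (x y : G × E) : G × E := (x.1 * α x.2 y.1, x.2 * y.2)

/-- Multiplicative inverse in `B = G ⋊_α E`. -/
def spInv (α : E → G → G) (x : G × E) : G × E := (α x.2⁻¹ x.1⁻¹, x.2⁻¹)

/-- The lambda map `λ_a(b) = a ∘ (a⁻ + b)` of `B`. -/
def spLam (α : E → G → G) (a b : G × E) : G × E := spMul α a (spAdd (spInv α a) b)

/-- The operation `a · b = λ_a(a⁻) + a∘b + λ_b(b⁻)` of `B`; it always lies in `G × {1}`. -/
def spDot (α : E → G → G) (a b : G × E) : G × E :=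
  spAdd (spAdd (spLam α a (spInv α a)) (spMul α a b)) (spLam α b (spInv α b))

/-- The descending series `B⁽¹⁾ = B`, `B⁽ⁿ⁺¹⁾ = B⁽ⁿ⁾·B + E` (indexed from `0`):
`B⁽ⁿ⁾·B + E` consists of the pairs whose first component lies in the additive subgroup of
`(G,+)` generated by the `G`-components of the elements `x·y`, `x ∈ B⁽ⁿ⁾`, `y ∈ B`. -/
def spSeries (α : E → G → G) : ℕ → Set (G × E)
  | 0 => Set.univ
  | n + 1 => {p : G × E | p.1 ∈ AddSubgroup.closure
      {g : G | ∃ x ∈ spSeries α n, ∃ y : G × E, spDot α x y = (g, 1)}}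

/-- The skew left brace operation `a · b = -a + a∘b + -b` on `G`. -/
def gDot (a b : G) : G := -a + a * b + -b

/-- The series `G⁽¹⁾ = G`, `G⁽ⁿ⁺¹⁾ = G⁽ⁿ⁾·G` for the skew left brace `G` (indexed from `0`). -/
def gSeries : ℕ → AddSubgroup G
  | 0 => ⊤
  | n + 1 => AddSubgroup.closure {g : G | ∃ x ∈ gSeries n, ∃ y : G, gDot x y = g}

lemma slb_zero_one : (0 : G) = 1 := by
  have h := SkewLeftBrace.compat (1 : G) 0 0
  simp only [add_zero, one_mul, zero_add] at h
  simpa using congrArg Neg.neg h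

lemma slb_key (g : G) : g * (g⁻¹ + g⁻¹) = -g := by
  rw [SkewLeftBrace.compat, mul_inv_cancel, ← slb_zero_one]
  simp

lemma spDot_eq (α : E → G → G) (hone : α 1 = id)
    (hcomp : ∀ e₁ e₂ : E, α (e₁ * e₂) = α e₁ ∘ α e₂)
    (hadd : ∀ (e : E) (x y : G), α e (x + y) = α e x + α e y)
    (g h : G) (e f : E) :
    spDot α (g, e) (h, f) = (-g + g * α e h + -h, 1) := by
  have hinv : ∀ (e : E) (x : G), α e (α e⁻¹ x) = x := by
    intro e x
    have h1 := congrFun (hcomp e e⁻¹) x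
    rw [mul_inv_cancel, hone] at h1
    exact h1.symm
  simp only [spDot, spLam, spMul, spInv, spAdd, hadd, hinv, Prod.mk.injEq, slb_key]
  simp

lemma spSeries_zero_mem (α : E → G → G) (k : ℕ) (e : E) :
    ((0 : G), e) ∈ spSeries α k := by
  cases k with
  | zero => trivial
  | succ m =>
    show (0 : G) ∈ AddSubgroup.closure _
    exact AddSubgroup.zero_mem _

lemma spSeries_eq_gSeries (α : E → G → G) (hone : α 1 = id)
    (hcomp : ∀ e₁ e₂ : E, α (e₁ * e₂) = α e₁ ∘ α e₂)
    (hadd : ∀ (e : E) (x y : G), α e (x + y) = α e x + α e y)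
    (hid : ∀ e : E, α e = id) (n : ℕ) :
    spSeries (E := E) α n = {p : G × E | p.1 ∈ gSeries n} := by
  induction n with
  | zero =>
    ext p
    simp [spSeries, gSeries]
  | succ m ih =>
    have hgen : {g : G | ∃ x ∈ spSeries α m, ∃ y : G × E, spDot α x y = (g, 1)}
        = {g : G | ∃ x ∈ gSeries (G := G) m, ∃ y : G, gDot x y = g} := by
      ext g
      constructor
      · rintro ⟨x, hx, y, hxy⟩
        refine ⟨x.1, by rw [ih] at hx; exact hx, y.1, ?_⟩
        have hd := spDot_eq α hone hcomp hadd x.1 y.1 x.2 y.2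
        rw [hid x.2] at hd
        simp only [Prod.mk.eta] at hd
        rw [hd] at hxy
        have := (Prod.mk.injEq _ _ _ _).mp hxy
        rw [← this.1]
        rfl
      · rintro ⟨x, hx, y, hy⟩
        refine ⟨(x, 1), by rw [ih]; exact hx, (y, 1), ?_⟩
        have hd := spDot_eq α hone hcomp hadd x y 1 1
        rw [hid 1] at hd
        rw [hd]
        simp [← hy, gDot]
    show {p : G × E | p.1 ∈ AddSubgroup.closure _} = _
    rw [hgen]
    rfl

/-- `B = G ⋊_α E` is right nilpotent iff `α_e = id` for all `e ∈ E` and the skew left brace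
`G` is right nilpotent. -/
theorem stmt18 (α : E → G → G)
    (hone : α 1 = id)
    (hcomp : ∀ e₁ e₂ : E, α (e₁ * e₂) = α e₁ ∘ α e₂)
    (hadd : ∀ (e : E) (x y : G), α e (x + y) = α e x + α e y)
    (hmul : ∀ (e : E) (x y : G), α e (x * y) = α e x * α e y) :
    (∃ n : ℕ, spSeries α n = {p : G × E | spAdd p p = p}) ↔
    ((∀ e : E, α e = id) ∧ ∃ n : ℕ, gSeries (G := G) n = ⊥) := by
  have hEset : {p : G × E | spAdd p p = p} = {p : G × E | p.1 = 0} := by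
    ext p
    constructor
    · intro h1
      have h2 : p.1 + p.1 = p.1 := congrArg Prod.fst h1
      exact add_eq_right.mp h2
    · intro h1
      show spAdd p p = p
      have h3 : spAdd p p = (p.1 + p.1, p.2) := rfl
      rw [h3, h1, add_zero, ← h1]
  constructor
  · rintro ⟨n, hn⟩
    rw [hEset] at hn
    cases n with
    | zero =>
      have hall : ∀ g : G, g = 0 := fun g => by
        have : (g, (1 : E)) ∈ spSeries α 0 := trivial
        rw [hn] at this
        exact this
      have hid : ∀ e : E, α e = id := fun e => funext fun x => by
        rw [hall (α e x), hall x]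
        rfl
      refine ⟨hid, 0, ?_⟩
      ext g
      simp [gSeries, AddSubgroup.mem_bot, hall g]
    | succ m =>
      have hmem : ∀ g : G, g ∈ AddSubgroup.closure
          {g : G | ∃ x ∈ spSeries α m, ∃ y : G × E, spDot α x y = (g, 1)} ↔ g = 0 := by
        intro g
        have := Set.ext_iff.mp hn (g, 1)
        simpa [spSeries] using this
      have hid : ∀ e : E, α e = id := by
        intro e
        funext h
        have hg : α e h + -h ∈ {g : G | ∃ x ∈ spSeries α m, ∃ y : G × E,
            spDot α x y = (g, 1)} := by
          refine ⟨(0, e), spSeries_zero_mem α m e, (h, 1), ?_⟩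
          rw [spDot_eq α hone hcomp hadd]
          rw [slb_zero_one]
          simp [← slb_zero_one]
        have h0 := (hmem _).mp (AddSubgroup.subset_closure hg)
        have : α e h = h := by
          have := congrArg (· + h) h0
          simpa using this
        simpa using this
      refine ⟨hid, m + 1, ?_⟩
      have h2 := spSeries_eq_gSeries α hone hcomp hadd hid (m + 1)
      rw [hn] at h2
      ext g
      rw [AddSubgroup.mem_bot]
      have := Set.ext_iff.mp h2 (g, 1)
      simp only [Set.mem_setOf_eq] at this
      exact this.symm
  · rintro ⟨hid, n, hn⟩
    refine ⟨n, ?_⟩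
    rw [spSeries_eq_gSeries α hone hcomp hadd hid n, hn, hEset]
    ext p
    simp [AddSubgroup.mem_bot]
end
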